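/- Let ω = (ρ, θ, ρ̃, θ̃, ι) and let h = z^{-1} z̃ ∈ G(ω). Then h normalizes the amalgamated subgroup: h^{-1} A h = A, where A denotes the common image of H and of H̃ in G(ω). -/

import Mathlib

/-- `ℤ* = ℤ \ {0}`. -/
abbrev Zstar : Type := {n : ℤ // n ≠ 0}

/-- Index set for the free basis `S` (and `S̃`): `(j, l, b)` with `b = false` for `v_j^l`
and `b = true` for `w_j^l`. -/
abbrev SIdx : Type := Zstar × ℤ × Bool

/-- The free group on three generators `x, y, z`. -/
abbrev F3 : Type := FreeGroup (Fin 3)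

/-- The generator `x`. -/
def gx : F3 := FreeGroup.of 0
/-- The generator `y`. -/
def gy : F3 := FreeGroup.of 1
/-- The generator `z`. -/
def gz : F3 := FreeGroup.of 2

/-- `v_j^l = z^{-l} x^j y^{-ρ(j)} z^l`. -/
def vgen (ρ : Equiv.Perm Zstar) (j : Zstar) (l : ℤ) : F3 :=
  gz ^ (-l) * gx ^ j.val * gy ^ (-(ρ j).val) * gz ^ l

/-- `w_j^l = z^{-l} x^j z y^{-θ(j)} z^l`. -/
def wgen (θ : Equiv.Perm Zstar) (j : Zstar) (l : ℤ) : F3 :=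
  gz ^ (-l) * gx ^ j.val * gz * gy ^ (-(θ j).val) * gz ^ l

/-- The element of `S` indexed by `(j, l, b)`. -/
def sElem (ρ θ : Equiv.Perm Zstar) (p : SIdx) : F3 :=
  if p.2.2 then wgen θ p.1 p.2.1 else vgen ρ p.1 p.2.1

/-- The canonical homomorphism from the free group on the index set of `S` to `F`,
sending `(j,l,false) ↦ v_j^l` and `(j,l,true) ↦ w_j^l`. -/
def sMap (ρ θ : Equiv.Perm Zstar) : FreeGroup SIdx →* F3 :=
  FreeGroup.lift (sElem ρ θ)

/-- `H = ⟨S⟩ ≤ F`. -/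
def Hsub (ρ θ : Equiv.Perm Zstar) : Subgroup F3 :=
  Subgroup.closure (Set.range (sElem ρ θ))

/-- The tuple `ω = (ρ, θ, ρ̃, θ̃, ι)`; the bijection `ι : S → S̃` is recorded as a bijection
of the index sets. -/
structure OmegaTuple : Type where
  ρ : Equiv.Perm Zstar
  θ : Equiv.Perm Zstar
  ρt : Equiv.Perm Zstar
  θt : Equiv.Perm Zstar
  ι : SIdx ≃ SIdx

/-- The two maps from the abstract copy of `H` (the free group on the index set of `S`)
into the two copies of `F₃`: into `F` via `S`, and into `F̃` via `ι` followed by `S̃`. -/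
def pushMaps (ω : OmegaTuple) : Bool → (FreeGroup SIdx →* F3) :=
  fun b => if b then (sMap ω.ρt ω.θt).comp (FreeGroup.map ω.ι) else sMap ω.ρ ω.θ

/-- `G(ω) = F *_{H = H̃} F̃`, the amalgamated product. -/
def GroupOmega (ω : OmegaTuple) : Type := Monoid.PushoutI (pushMaps ω)

instance (ω : OmegaTuple) : Group (GroupOmega ω) := by
  delta GroupOmega; infer_instance

/-- The canonical map `F → G(ω)`. -/
def ofb (ω : OmegaTuple) : F3 →* GroupOmega ω := Monoid.PushoutI.of (φ := pushMaps ω) false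

/-- The canonical map `F̃ → G(ω)`. -/
def oft (ω : OmegaTuple) : F3 →* GroupOmega ω := Monoid.PushoutI.of (φ := pushMaps ω) true

/-- `c_{l,j} = z^l x^j`. -/
def cElem (l j : ℤ) : F3 := gz ^ l * gx ^ j

/-- `d_{M,M'}^l = v_M^l (v_{M'}^l)⁻¹`. -/
def dElem (ρ : Equiv.Perm Zstar) (M M' : Zstar) (l : ℤ) : F3 :=
  vgen ρ M l * (vgen ρ M' l)⁻¹

/-- The index `(j,l,b)` corresponds to an element of `S_N` (resp. `S̃_N`):
`j ∈ [-N,N] ∩ ℤ*` and `l ∈ [-N,N]`. -/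
def InSN (N : ℤ) (p : SIdx) : Prop :=
  p.1.val ∈ Set.Icc (-N) N ∧ p.2.1 ∈ Set.Icc (-N) N

/-- A (total) map `g` extends a partial bijection `f`. -/
def Extends {α β : Type*} (g : α → β) (f : PartialEquiv α β) : Prop :=
  ∀ a ∈ f.source, g a = f a

/-- A partial bijection of `ℤ*` is independent from `[-N, N]`: its domain and image
are disjoint from `[-N, N]`. -/
def IndepFromIcc (f : PartialEquiv Zstar Zstar) (N : ℤ) : Prop :=
  (∀ a ∈ f.source, a.val ∉ Set.Icc (-N) N) ∧ (∀ a ∈ f.target, a.val ∉ Set.Icc (-N) N)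

/-- A partial bijection of the index set is independent from `(S_N, S̃_N)`:
its domain misses `S_N` and its image misses `S̃_N`. -/
def IndepFromSN (f : PartialEquiv SIdx SIdx) (N : ℤ) : Prop :=
  (∀ p ∈ f.source, ¬ InSN N p) ∧ (∀ p ∈ f.target, ¬ InSN N p)

/-!
Conjugation by `z` shifts the level `l` of every `v_j^l`, `w_j^l`, so `z` normalizes `H` in `F`;
likewise `z̃` normalizes `H̃` in `F̃`. Both `H` and `H̃` map onto the same subgroup `A` of `G(ω)`,
since `v_j^l, w_j^l` and their partners under `ι` are identified there. Hence the images of `z`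
and `z̃`, and so `h = z⁻¹ z̃`, lie in the normalizer of `A`.
-/

open Subgroup

theorem Subgroup.mem_normalizer_closure_range {G ι : Type*} [Group G] {f : ι → G} {g : G}
    {σ : ι → ι} (hσ : Function.Surjective σ) (hf : ∀ i, g * f i * g⁻¹ = f (σ i)) :
    g ∈ normalizer (closure (Set.range f) : Set G) := by
  rw [mem_normalizer_iff_map_conj_eq, MonoidHom.map_closure, ← Set.range_comp]
  have hconj : (MulAut.conj g : G →* G) ∘ f = f ∘ σ := funext hf
  rw [hconj, hσ.range_comp]

theorem gz_mul_sElem_mul_gz_inv (ρ θ : Equiv.Perm Zstar) (p : SIdx) :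
    gz * sElem ρ θ p * gz⁻¹ = sElem ρ θ (p.1, p.2.1 - 1, p.2.2) := by
  obtain ⟨j, l, _ | _⟩ := p <;> simp only [sElem, vgen, wgen, Bool.false_eq_true, if_true,
    if_false] <;> group

theorem gz_mem_normalizer_Hsub (ρ θ : Equiv.Perm Zstar) : gz ∈ normalizer (Hsub ρ θ : Set F3) :=
  mem_normalizer_closure_range (σ := fun p : SIdx => (p.1, p.2.1 - 1, p.2.2))
    (fun q => ⟨(q.1, q.2.1 + 1, q.2.2), by simp⟩) (gz_mul_sElem_mul_gz_inv ρ θ)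

theorem ofb_sElem_eq_oft_sElem (ω : OmegaTuple) (p : SIdx) :
    ofb ω (sElem ω.ρ ω.θ p) = oft ω (sElem ω.ρt ω.θt (ω.ι p)) := by
  have hb := Monoid.PushoutI.of_apply_eq_base (pushMaps ω) false (FreeGroup.of p)
  have ht := Monoid.PushoutI.of_apply_eq_base (pushMaps ω) true (FreeGroup.of p)
  simp only [pushMaps, sMap, Bool.false_eq_true, if_true, if_false, MonoidHom.comp_apply,
    FreeGroup.map.of, FreeGroup.lift_apply_of] at hb ht
  exact hb.trans ht.symm

theorem map_ofb_Hsub_eq_map_oft_Hsub (ω : OmegaTuple) :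
    (Hsub ω.ρ ω.θ).map (ofb ω) = (Hsub ω.ρt ω.θt).map (oft ω) := by
  simp only [Hsub, MonoidHom.map_closure, ← Set.range_comp]
  have hcomp : ofb ω ∘ sElem ω.ρ ω.θ = (oft ω ∘ sElem ω.ρt ω.θt) ∘ ω.ι :=
    funext (ofb_sElem_eq_oft_sElem ω)
  rw [hcomp, ω.ι.surjective.range_comp]

/-- the element `h = z⁻¹ z̃ ∈ G(ω)` normalizes the amalgamated subgroup
`A`, the common image of `H` and `H̃` in `G(ω)`: `h⁻¹ A h = A`. -/
theorem stmt16 (ω : OmegaTuple) :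
    (Hsub ω.ρ ω.θ).map (ofb ω) = (Hsub ω.ρt ω.θt).map (oft ω) ∧
    (fun a => (ofb ω gz⁻¹ * oft ω gz)⁻¹ * a * (ofb ω gz⁻¹ * oft ω gz)) ''
        ((Hsub ω.ρ ω.θ).map (ofb ω) : Set (GroupOmega ω)) =
      ((Hsub ω.ρ ω.θ).map (ofb ω) : Set (GroupOmega ω)) := by
  have hA := map_ofb_Hsub_eq_map_oft_Hsub ω
  refine ⟨hA, ?_⟩
  set A := (Hsub ω.ρ ω.θ).map (ofb ω)
  have hz : ofb ω gz ∈ normalizer (A : Set (GroupOmega ω)) :=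
    le_normalizer_map _ ⟨gz, gz_mem_normalizer_Hsub _ _, rfl⟩
  have hzt : oft ω gz ∈ normalizer (A : Set (GroupOmega ω)) :=
    hA ▸ le_normalizer_map _ ⟨gz, gz_mem_normalizer_Hsub _ _, rfl⟩
  have hh : (ofb ω gz⁻¹ * oft ω gz)⁻¹ ∈ normalizer (A : Set (GroupOmega ω)) :=
    inv_mem (mul_mem (map_inv (ofb ω) gz ▸ inv_mem hz) hzt)
  convert mem_normalizer_iff_conj_image_eq.1 hh using 2
  rw [MulAut.conj_apply, inv_inv]
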